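/- (Pointwise bounds for the entire approximation to truncated exponential decay, Lemma) Let γ > 0. (a) For every real x with γx − 1/(2γ) > 0, 0 ≤ e^{−x} − f₁(x;γ) ≤ (1/(2√π·(γx − 1/(2γ))))·e^{−γ²x² − 1/(4γ²)}. (b) For every real x > 0, 0 ≤ f₁(−x;γ) ≤ (1/(2√π·(1/(2γ) + γx)))·e^{−γ²x² − 1/(4γ²)}. -/

import Mathlib

open MeasureTheory Complex
open scoped Real

noncomputable section

/-- The complementary error function `erfc(x) = (2/√π) ∫_x^∞ e^{-y²} dy`. -/
def erfc (x : ℝ) : ℝ := (2 / Real.sqrt Real.pi) * ∫ y in Set.Ioi x, Real.exp (-y ^ 2)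

/-- `f₁(x;γ) = (1/2) e^{-x} erfc(1/(2γ) - γx)`. -/
def f₁ (γ x : ℝ) : ℝ := (1 / 2) * Real.exp (-x) * erfc (1 / (2 * γ) - γ * x)

lemma gauss_integrable : Integrable (fun y : ℝ => Real.exp (-y ^ 2)) := by
  simpa using integrable_exp_neg_mul_sq (by norm_num : (0:ℝ) < 1)

lemma gauss_tail_nonneg (a : ℝ) : 0 ≤ ∫ y in Set.Ioi a, Real.exp (-y ^ 2) :=
  integral_nonneg fun y => (Real.exp_pos _).le

lemma integral_mul_gauss_Ioi (a : ℝ) :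
    ∫ y in Set.Ioi a, y * Real.exp (-y ^ 2) = Real.exp (-a ^ 2) / 2 := by
  have hderiv : ∀ y ∈ Set.Ioi a,
      HasDerivAt (fun y : ℝ => -Real.exp (-y ^ 2) / 2) (y * Real.exp (-y ^ 2)) y := by
    intro y _
    have h : HasDerivAt (fun y : ℝ => -y ^ 2) (-(2 * y)) y := by
      simpa using ((hasDerivAt_pow 2 y).fun_neg)
    have := (h.exp).fun_neg.div_const 2
    exact this.congr_deriv (by ring)
  have hint : IntegrableOn (fun y : ℝ => y * Real.exp (-y ^ 2)) (Set.Ioi a) := by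
    have := integrable_mul_exp_neg_mul_sq (by norm_num : (0:ℝ) < 1)
    simpa using this.integrableOn
  have htend : Filter.Tendsto (fun y : ℝ => -Real.exp (-y ^ 2) / 2) Filter.atTop (nhds 0) := by
    have h1 : Filter.Tendsto (fun y : ℝ => -y ^ 2) Filter.atTop Filter.atBot := by
      apply Filter.tendsto_neg_atBot_iff.mpr
      exact Filter.tendsto_pow_atTop (by norm_num)
    have := (Real.tendsto_exp_atBot.comp h1).neg.div_const 2
    simpa using this
  have hcont : ContinuousWithinAt (fun y : ℝ => -Real.exp (-y ^ 2) / 2) (Set.Ici a) a := by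
    apply Continuous.continuousWithinAt
    continuity
  have := integral_Ioi_of_hasDerivAt_of_tendsto hcont hderiv hint htend
  rw [this]; ring

lemma gauss_tail_le (a : ℝ) (ha : 0 < a) :
    ∫ y in Set.Ioi a, Real.exp (-y ^ 2) ≤ Real.exp (-a ^ 2) / (2 * a) := by
  have hmono : ∫ y in Set.Ioi a, Real.exp (-y ^ 2)
      ≤ ∫ y in Set.Ioi a, (y / a) * Real.exp (-y ^ 2) := by
    apply setIntegral_mono_on
    · exact gauss_integrable.integrableOn
    · have := integrable_mul_exp_neg_mul_sq (by norm_num : (0:ℝ) < 1)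
      have h2 : Integrable (fun y : ℝ => (y / a) * Real.exp (-y ^ 2)) := by
        have := this.div_const a
        apply this.congr
        apply Filter.Eventually.of_forall
        intro y; simp; ring
      exact h2.integrableOn
    · exact measurableSet_Ioi
    · intro y hy
      have h1 : (1:ℝ) ≤ y / a := (one_le_div ha).mpr (le_of_lt hy)
      nlinarith [Real.exp_pos (-y ^ 2)]
  have heq : ∫ y in Set.Ioi a, (y / a) * Real.exp (-y ^ 2)
      = (∫ y in Set.Ioi a, y * Real.exp (-y ^ 2)) / a := by
    rw [← integral_div]
    congr 1; ext y; ring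
  rw [heq, integral_mul_gauss_Ioi] at hmono
  calc ∫ y in Set.Ioi a, Real.exp (-y ^ 2) ≤ Real.exp (-a ^ 2) / 2 / a := hmono
    _ = Real.exp (-a ^ 2) / (2 * a) := by ring

lemma gauss_tail_neg (a : ℝ) :
    ∫ y in Set.Ioi (-a), Real.exp (-y ^ 2)
      = Real.sqrt Real.pi - ∫ y in Set.Ioi a, Real.exp (-y ^ 2) := by
  have htotal : ∫ y : ℝ, Real.exp (-y ^ 2) = Real.sqrt Real.pi := by
    have := integral_gaussian 1
    simpa using this
  have hsplit : (∫ y in Set.Iic a, Real.exp (-y ^ 2)) + ∫ y in Set.Ioi a, Real.exp (-y ^ 2)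
      = Real.sqrt Real.pi := by
    rw [← htotal]
    exact intervalIntegral.integral_Iic_add_Ioi gauss_integrable.integrableOn gauss_integrable.integrableOn
  have hsymm : ∫ y in Set.Ioi (-a), Real.exp (-y ^ 2) = ∫ y in Set.Iic a, Real.exp (-y ^ 2) := by
    rw [show (Set.Iic a) = Set.Iic (-(-a)) by ring_nf]
    rw [← integral_comp_neg_Ioi]
    congr 1; ext y; ring_nf
  rw [hsymm]; linarith

/-- **Pointwise bounds for the entire approximation to truncated exponential decay (Lemma).** -/
theorem pointwise_bounds_f₁ (γ : ℝ) (hγ : 0 < γ) :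
    (∀ x : ℝ, 0 < γ * x - 1 / (2 * γ) →
      0 ≤ Real.exp (-x) - f₁ γ x ∧
      Real.exp (-x) - f₁ γ x ≤
        (1 / (2 * Real.sqrt Real.pi * (γ * x - 1 / (2 * γ)))) *
          Real.exp (-(γ ^ 2 * x ^ 2) - 1 / (4 * γ ^ 2))) ∧
    (∀ x : ℝ, 0 < x →
      0 ≤ f₁ γ (-x) ∧
      f₁ γ (-x) ≤
        (1 / (2 * Real.sqrt Real.pi * (1 / (2 * γ) + γ * x))) *
          Real.exp (-(γ ^ 2 * x ^ 2) - 1 / (4 * γ ^ 2))) := by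
  have hγ' : γ ≠ 0 := ne_of_gt hγ
  have hπ : 0 < Real.sqrt Real.pi := Real.sqrt_pos.mpr Real.pi_pos
  constructor
  · intro x hx
    set a : ℝ := γ * x - 1 / (2 * γ) with ha
    have harg : 1 / (2 * γ) - γ * x = -a := by rw [ha]; ring
    have hdiff : Real.exp (-x) - f₁ γ x
        = Real.exp (-x) * (∫ y in Set.Ioi a, Real.exp (-y ^ 2)) / Real.sqrt Real.pi := by
      rw [f₁, erfc, harg, gauss_tail_neg]
      field_simp
      ring
    have hexp : Real.exp (-x) * Real.exp (-a ^ 2)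
        = Real.exp (-(γ ^ 2 * x ^ 2) - 1 / (4 * γ ^ 2)) := by
      rw [← Real.exp_add]
      congr 1
      rw [ha]
      field_simp
      ring
    constructor
    · rw [hdiff]
      positivity
    · rw [hdiff]
      have h1 : Real.exp (-x) * (∫ y in Set.Ioi a, Real.exp (-y ^ 2))
          ≤ Real.exp (-x) * (Real.exp (-a ^ 2) / (2 * a)) :=
        mul_le_mul_of_nonneg_left (gauss_tail_le a hx) (Real.exp_pos _).le
      calc Real.exp (-x) * (∫ y in Set.Ioi a, Real.exp (-y ^ 2)) / Real.sqrt Real.pi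
          ≤ Real.exp (-x) * (Real.exp (-a ^ 2) / (2 * a)) / Real.sqrt Real.pi :=
            by gcongr
        _ = (1 / (2 * Real.sqrt Real.pi * a)) * (Real.exp (-x) * Real.exp (-a ^ 2)) := by
            field_simp
        _ = (1 / (2 * Real.sqrt Real.pi * (γ * x - 1 / (2 * γ)))) *
              Real.exp (-(γ ^ 2 * x ^ 2) - 1 / (4 * γ ^ 2)) := by rw [hexp, ← ha]
  · intro x hx
    set b : ℝ := 1 / (2 * γ) + γ * x with hb
    have hbpos : 0 < b := by
      have : 0 < 1 / (2 * γ) := by positivity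
      have : 0 < γ * x := mul_pos hγ hx
      rw [hb]; positivity
    have harg : 1 / (2 * γ) - γ * (-x) = b := by rw [hb]; ring
    have hval : f₁ γ (-x) = Real.exp x * (∫ y in Set.Ioi b, Real.exp (-y ^ 2)) / Real.sqrt Real.pi := by
      rw [f₁, erfc, harg, neg_neg]
      field_simp
    have hexp : Real.exp x * Real.exp (-b ^ 2)
        = Real.exp (-(γ ^ 2 * x ^ 2) - 1 / (4 * γ ^ 2)) := by
      rw [← Real.exp_add]
      congr 1
      rw [hb]
      field_simp
      ring
    constructor
    · rw [hval]
      have := gauss_tail_nonneg b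
      positivity
    · rw [hval]
      have h1 : Real.exp x * (∫ y in Set.Ioi b, Real.exp (-y ^ 2))
          ≤ Real.exp x * (Real.exp (-b ^ 2) / (2 * b)) :=
        mul_le_mul_of_nonneg_left (gauss_tail_le b hbpos) (Real.exp_pos _).le
      calc Real.exp x * (∫ y in Set.Ioi b, Real.exp (-y ^ 2)) / Real.sqrt Real.pi
          ≤ Real.exp x * (Real.exp (-b ^ 2) / (2 * b)) / Real.sqrt Real.pi :=
            by gcongr
        _ = (1 / (2 * Real.sqrt Real.pi * b)) * (Real.exp x * Real.exp (-b ^ 2)) := by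
            field_simp
        _ = (1 / (2 * Real.sqrt Real.pi * (1 / (2 * γ) + γ * x))) *
              Real.exp (-(γ ^ 2 * x ^ 2) - 1 / (4 * γ ^ 2)) := by rw [hexp, ← hb]
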